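/- arXiv:1807.07030 — 2 statements merged into one kernel-verified Lean document; each statement's English description precedes it below -/
import Mathlib

section
/- If G is a finite simple graph of order n and t is a positive integer with th_⌊Z⌋(G) ≤ t, then n ≤ (t+1)²/4. -/
open SimpleGraph

namespace ZFT

variable {V : Type*} {α : Type*} {β : Type*}

/-! ### Standard zero forcing (simultaneous propagation) -/

/-- One round of simultaneous standard zero forcing: a blue vertex forces its
unique white neighbor. -/
def zStep (G : SimpleGraph V) (S : Set V) : Set V :=
  S ∪ {w | ∃ u ∈ S, G.Adj u w ∧ ∀ x, G.Adj u x → x ∉ S → x = w}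

/-- `B` is a standard zero forcing set of `G`. -/
def IsZeroForcingSet (G : SimpleGraph V) (B : Set V) : Prop :=
  ∃ t : ℕ, (zStep G)^[t] B = Set.univ

/-- The standard propagation time `pt_Z(G;B)` (`⊤` if `B` is not a zero forcing set). -/
noncomputable def ptZ (G : SimpleGraph V) (B : Set V) : ℕ∞ :=
  sInf {n : ℕ∞ | ∃ t : ℕ, n = t ∧ (zStep G)^[t] B = Set.univ}

/-- The standard throttling number `th_Z(G;B) = |B| + pt_Z(G;B)`. -/
noncomputable def thZ (G : SimpleGraph V) (B : Set V) : ℕ∞ :=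
  (B.ncard : ℕ∞) + ptZ G B

/-- The standard throttling number `th_Z(G)`. -/
noncomputable def thZgraph (G : SimpleGraph V) : ℕ∞ :=
  sInf {n : ℕ∞ | ∃ B : Set V, IsZeroForcingSet G B ∧ n = thZ G B}

/-- The standard zero forcing number `Z(G)`. -/
noncomputable def Znum (G : SimpleGraph V) : ℕ :=
  sInf {k : ℕ | ∃ B : Set V, IsZeroForcingSet G B ∧ B.ncard = k}

/-- The standard propagation time `pt_Z(G)`, minimized over minimum zero forcing sets. -/
noncomputable def ptZgraph (G : SimpleGraph V) : ℕ∞ :=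
  sInf {n : ℕ∞ | ∃ B : Set V, IsZeroForcingSet G B ∧ B.ncard = Znum G ∧ n = ptZ G B}

/-! ### Sets of standard forces -/

/-- Validity of a single standard force `u → w` when `blue` is the blue set. -/
def zForceValid (G : SimpleGraph V) (blue : Set V) (u w : V) : Prop :=
  u ∈ blue ∧ w ∉ blue ∧ G.Adj u w ∧ ∀ x, G.Adj u x → x ∉ blue → x = w

/-- Validity of a chronological list of standard forces starting from a blue set. -/
def zValidList (G : SimpleGraph V) : Set V → List (V × V) → Prop
  | _, [] => True
  | blue, p :: L => zForceValid G blue p.1 p.2 ∧ zValidList G (insert p.2 blue) L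

/-- The blue set after performing all forces in a list, starting from `B`. -/
def endBlue (B : Set V) (L : List (V × V)) : Set V :=
  B ∪ {w | ∃ u, (u, w) ∈ L}

/-- The set of vertices that have performed a force in a list. -/
def endForced (L : List (V × V)) : Set V := {u | ∃ w, (u, w) ∈ L}

/-- `F` is a set of standard forces of `B` in `G` (recorded from a maximal
chronological list of forces). -/
def IsZForceSet (G : SimpleGraph V) (B : Set V) (F : Set (V × V)) : Prop :=
  ∃ L : List (V × V), zValidList G B L ∧
    (∀ u w, ¬ zForceValid G (endBlue B L) u w) ∧ F = {p | p ∈ L}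

/-- The set of blue vertices at time `t` when the forces of `F` are performed at the
earliest possible time steps, starting from `B` blue. -/
def zBlueAt (G : SimpleGraph V) (F : Set (V × V)) (B : Set V) : ℕ → Set V
  | 0 => B
  | t + 1 =>
      zBlueAt G F B t ∪ {w | ∃ v, (v, w) ∈ F ∧ zForceValid G (zBlueAt G F B t) v w}

/-- The standard propagation time `pt_Z(G;F)` of a set of forces `F` of `B`. -/
noncomputable def ptZofF (G : SimpleGraph V) (F : Set (V × V)) (B : Set V) : ℕ∞ :=
  sInf {n : ℕ∞ | ∃ t : ℕ, n = t ∧ zBlueAt G F B t = Set.univ}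

/-! ### `⌊Z⌋` (minor monotone floor) forcing -/

/-- Validity of a single `⌊Z⌋` force `u → w`: `u` is blue and has not yet forced, `w`
is white, and either `w` is the unique white neighbor of `u`, or all neighbors of `u`
are blue (a hop). -/
def zfForceValid (G : SimpleGraph V) (blue forced : Set V) (u w : V) : Prop :=
  u ∈ blue ∧ w ∉ blue ∧ u ∉ forced ∧
    ((G.Adj u w ∧ ∀ x, G.Adj u x → x ∉ blue → x = w) ∨ ∀ x, G.Adj u x → x ∈ blue)

/-- Validity of a chronological list of `⌊Z⌋` forces. -/
def zfValidList (G : SimpleGraph V) : Set V → Set V → List (V × V) → Prop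
  | _, _, [] => True
  | blue, forced, p :: L =>
      zfForceValid G blue forced p.1 p.2 ∧
        zfValidList G (insert p.2 blue) (insert p.1 forced) L

/-- `F` is a set of `⌊Z⌋` forces of `B` in `G` (recorded from a maximal chronological
list of `⌊Z⌋` forces starting with `B` blue). -/
def IsZFForceSet (G : SimpleGraph V) (B : Set V) (F : Set (V × V)) : Prop :=
  ∃ L : List (V × V), zfValidList G B ∅ L ∧
    (∀ u w, ¬ zfForceValid G (endBlue B L) (endForced L) u w) ∧ F = {p | p ∈ L}

/-- The set of blue vertices at time `t` when the `⌊Z⌋` forces of `F` are performed at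
the earliest possible time steps, starting from `B` blue. -/
def zfBlueAt (G : SimpleGraph V) (F : Set (V × V)) (B : Set V) : ℕ → Set V
  | 0 => B
  | t + 1 =>
      zfBlueAt G F B t ∪
        {w | ∃ v, (v, w) ∈ F ∧ v ∈ zfBlueAt G F B t ∧ w ∉ zfBlueAt G F B t ∧
          (∀ w', (v, w') ∈ F → w' ∈ zfBlueAt G F B t → w' ∈ B) ∧
          ((G.Adj v w ∧ ∀ x, G.Adj v x → x ∉ zfBlueAt G F B t → x = w) ∨
            ∀ x, G.Adj v x → x ∈ zfBlueAt G F B t)}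

/-- The `⌊Z⌋` propagation time `pt_⌊Z⌋(G;F)` of a set of `⌊Z⌋` forces `F` of `B`. -/
noncomputable def ptZFofF (G : SimpleGraph V) (F : Set (V × V)) (B : Set V) : ℕ∞ :=
  sInf {n : ℕ∞ | ∃ t : ℕ, n = t ∧ zfBlueAt G F B t = Set.univ}

/-- The `⌊Z⌋` propagation time `pt_⌊Z⌋(G;B)`, minimized over sets of `⌊Z⌋` forces of `B`. -/
noncomputable def ptZF (G : SimpleGraph V) (B : Set V) : ℕ∞ :=
  sInf {n : ℕ∞ | ∃ F : Set (V × V), IsZFForceSet G B F ∧ n = ptZFofF G F B}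

/-- The `⌊Z⌋` throttling number `th_⌊Z⌋(G;B) = |B| + pt_⌊Z⌋(G;B)`. -/
noncomputable def thZF (G : SimpleGraph V) (B : Set V) : ℕ∞ :=
  (B.ncard : ℕ∞) + ptZF G B

/-- The `⌊Z⌋` throttling number `th_⌊Z⌋(G)`, minimized over all `B ⊆ V(G)`. -/
noncomputable def thZFgraph (G : SimpleGraph V) : ℕ∞ :=
  sInf {n : ℕ∞ | ∃ B : Set V, n = thZF G B}

/-- `B` is a `⌊Z⌋` forcing set of `G`. -/
def IsZFForcingSet (G : SimpleGraph V) (B : Set V) : Prop :=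
  ∃ F : Set (V × V), IsZFForceSet G B F ∧ B ∪ {w | ∃ u, (u, w) ∈ F} = Set.univ

/-- The `⌊Z⌋` forcing number `⌊Z⌋(G)`. -/
noncomputable def ZFnum (G : SimpleGraph V) : ℕ :=
  sInf {k : ℕ | ∃ B : Set V, IsZFForcingSet G B ∧ B.ncard = k}

/-- The `⌊Z⌋` propagation time `pt_⌊Z⌋(G)`, minimized over minimum `⌊Z⌋` forcing sets. -/
noncomputable def ptZFgraph (G : SimpleGraph V) : ℕ∞ :=
  sInf {n : ℕ∞ | ∃ B : Set V, IsZFForcingSet G B ∧ B.ncard = ZFnum G ∧ n = ptZF G B}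

/-! ### Contractions, minors, and products -/

/-- The graph obtained from `H` by contracting (all) the edges in `C`: its vertices are
the connected components of the spanning subgraph of `H` with edge set `C ∩ E(H)`, and
two distinct components are adjacent iff `H` has an edge between them. -/
def contractEdges (H : SimpleGraph α) (C : Set (Sym2 α)) :
    SimpleGraph (SimpleGraph.fromEdgeSet C ⊓ H).ConnectedComponent where
  Adj c d := c ≠ d ∧ ∃ a b, H.Adj a b ∧
      (SimpleGraph.fromEdgeSet C ⊓ H).connectedComponentMk a = c ∧
      (SimpleGraph.fromEdgeSet C ⊓ H).connectedComponentMk b = d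
  symm := ⟨by
    rintro c d ⟨hcd, a, b, hab, ha, hb⟩
    exact ⟨hcd.symm, b, a, hab.symm, hb, ha⟩⟩
  loopless := ⟨fun c h => h.1 rfl⟩

/-- `G` is a minor of `H`: `G` is isomorphic to a subgraph of a graph obtained from an
induced subgraph of `H` by contracting a set of edges. -/
def IsMinor (G : SimpleGraph β) (H : SimpleGraph α) : Prop :=
  ∃ (s : Set α) (C : Set (Sym2 s))
    (G'' : SimpleGraph (SimpleGraph.fromEdgeSet C ⊓ H.induce s).ConnectedComponent),
      G'' ≤ contractEdges (H.induce s) C ∧ Nonempty (G ≃g G'')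

/-- The Cartesian product `K_a □ P_{b+1}`. -/
def prodKP (a b : ℕ) : SimpleGraph (Fin a × Fin (b + 1)) :=
  (⊤ : SimpleGraph (Fin a)) □ SimpleGraph.pathGraph (b + 1)

/-- The path edges of `K_a □ P_{b+1}` (edges within the copies of `P_{b+1}`). -/
def pathEdges (a b : ℕ) : Set (Sym2 (Fin a × Fin (b + 1))) :=
  {e | ∃ (i : Fin a) (j j' : Fin (b + 1)),
    (SimpleGraph.pathGraph (b + 1)).Adj j j' ∧ e = s((i, j), (i, j'))}

/-- The complete edges of `K_a □ P_{b+1}` (edges within the copies of `K_a`). -/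
def completeEdges (a b : ℕ) : Set (Sym2 (Fin a × Fin (b + 1))) :=
  {e | ∃ (i i' : Fin a) (j : Fin (b + 1)), i ≠ i' ∧ e = s((i, j), (i', j))}

/-- The star `K_{1,n-1}` on `n` vertices: vertex `0` is adjacent to all others. -/
def starGraph (n : ℕ) : SimpleGraph (Fin n) where
  Adj i j := i ≠ j ∧ ((i : ℕ) = 0 ∨ (j : ℕ) = 0)
  symm := ⟨by rintro i j ⟨h1, h2⟩; exact ⟨h1.symm, h2.symm⟩⟩
  loopless := ⟨fun i h => h.1 rfl⟩

/-- The independence number `α(G)`. -/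
noncomputable def indepNum (G : SimpleGraph V) : ℕ :=
  sSup {k : ℕ | ∃ s : Set V, (∀ a ∈ s, ∀ b ∈ s, a ≠ b → ¬ G.Adj a b) ∧ s.ncard = k}

/-!
Each vertex performs at most one force, so at every time step each new blue vertex can be
charged to a distinct blue vertex that has not forced yet, and that vertex is then used up.
Hence the number of vertices still able to force never exceeds `|B|`, at most `|B|` vertices
turn blue per round, and `n ≤ |B| (p + 1)` after `p` rounds. With `|B| + p ≤ t`, AM-GM gives
`|B| (p + 1) ≤ (t + 1)² / 4`.
-/

theorem zfValidList.fst_notMem {G : SimpleGraph V} :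
    ∀ {blue forced : Set V} {L : List (V × V)}, zfValidList G blue forced L →
      ∀ p ∈ L, p.1 ∉ forced
  | _, _, [], _ => by simp
  | _, _, _ :: _, ⟨hq, hL⟩ => by
    rintro p (_ | ⟨_, hp⟩)
    · exact hq.2.2.1
    · exact fun h => hL.fst_notMem p hp (Set.mem_insert_of_mem _ h)

theorem zfValidList.nodup_map_fst {G : SimpleGraph V} :
    ∀ {blue forced : Set V} {L : List (V × V)}, zfValidList G blue forced L →
      (L.map Prod.fst).Nodup
  | _, _, [], _ => List.nodup_nil
  | _, _, q :: _, ⟨_, hL⟩ => by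
    refine List.nodup_cons.2 ⟨?_, hL.nodup_map_fst⟩
    simp only [List.mem_map, not_exists, not_and]
    exact fun p hp hpq => hL.fst_notMem p hp (hpq ▸ Set.mem_insert _ _)

theorem IsZFForceSet.subsingleton_targets {G : SimpleGraph V} {B : Set V} {F : Set (V × V)}
    (hF : IsZFForceSet G B F) (v : V) : {w | (v, w) ∈ F}.Subsingleton := by
  obtain ⟨L, hL, -, rfl⟩ := hF
  exact fun _ h₁ _ h₂ =>
    congrArg Prod.snd (List.inj_on_of_nodup_map hL.nodup_map_fst h₁ h₂ rfl)

section Counting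

variable {G : SimpleGraph V} {F : Set (V × V)} {B : Set V}

/-- The vertices allowed to force in round `s + 1` of `zfBlueAt`. -/
def zfActiveAt (G : SimpleGraph V) (F : Set (V × V)) (B : Set V) (s : ℕ) : Set V :=
  {v | v ∈ zfBlueAt G F B s ∧ ∀ w, (v, w) ∈ F → w ∈ zfBlueAt G F B s → w ∈ B}

theorem zfBlueAt_subset_succ (s : ℕ) : zfBlueAt G F B s ⊆ zfBlueAt G F B (s + 1) :=
  Set.subset_union_left

theorem subset_zfBlueAt (s : ℕ) : B ⊆ zfBlueAt G F B s := by
  induction s with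
  | zero => exact subset_rfl
  | succ s ih => exact ih.trans (zfBlueAt_subset_succ s)

theorem zfActiveAt_zero : zfActiveAt G F B 0 = B :=
  Set.ext fun _ => ⟨And.left, fun hv => ⟨hv, fun _ _ hw => hw⟩⟩

theorem zfActiveAt_succ_subset (s : ℕ) :
    zfActiveAt G F B (s + 1) ⊆
      (zfActiveAt G F B s ∩ zfActiveAt G F B (s + 1)) ∪
        (zfBlueAt G F B (s + 1) \ zfBlueAt G F B s) := by
  intro v hv
  by_cases hvs : v ∈ zfBlueAt G F B s
  · exact Or.inl ⟨⟨hvs, fun w hw hws => hv.2 w hw (zfBlueAt_subset_succ s hws)⟩, hv⟩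
  · exact Or.inr ⟨hv.1, hvs⟩

theorem exists_forcer_of_mem_diff {s : ℕ} {w : V}
    (hw : w ∈ zfBlueAt G F B (s + 1) \ zfBlueAt G F B s) :
    ∃ v, (v, w) ∈ F ∧ v ∈ zfActiveAt G F B s \ zfActiveAt G F B (s + 1) := by
  have hw_succ := hw.1
  obtain ⟨hws | ⟨v, hvw, hv, -, hact, -⟩, hw₂⟩ := hw
  · exact absurd hws hw₂
  -- `w ∉ B`, so once `w` is blue the force `v → w` disqualifies `v`.
  exact ⟨v, hvw, ⟨hv, hact⟩, fun hv' => hw₂ (subset_zfBlueAt s (hv'.2 w hvw hw_succ))⟩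

variable [Finite V]

theorem ncard_zfBlueAt_diff_le (hF : ∀ v, {w | (v, w) ∈ F}.Subsingleton) (s : ℕ) :
    (zfBlueAt G F B (s + 1) \ zfBlueAt G F B s).ncard ≤
      (zfActiveAt G F B s \ zfActiveAt G F B (s + 1)).ncard := by
  choose! f hfF hf using fun w (hw : w ∈ zfBlueAt G F B (s + 1) \ zfBlueAt G F B s) =>
    exists_forcer_of_mem_diff hw
  refine Set.ncard_le_ncard_of_injOn f hf ?_
  exact fun w₁ hw₁ w₂ hw₂ h => hF _ (hfF w₁ hw₁) (h ▸ hfF w₂ hw₂)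

theorem ncard_zfActiveAt_succ_le (hF : ∀ v, {w | (v, w) ∈ F}.Subsingleton) (s : ℕ) :
    (zfActiveAt G F B (s + 1)).ncard ≤ (zfActiveAt G F B s).ncard :=
  calc (zfActiveAt G F B (s + 1)).ncard
      ≤ (zfActiveAt G F B s ∩ zfActiveAt G F B (s + 1)).ncard +
          (zfBlueAt G F B (s + 1) \ zfBlueAt G F B s).ncard :=
        (Set.ncard_le_ncard (zfActiveAt_succ_subset s)).trans (Set.ncard_union_le _ _)
    _ ≤ (zfActiveAt G F B s ∩ zfActiveAt G F B (s + 1)).ncard +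
          (zfActiveAt G F B s \ zfActiveAt G F B (s + 1)).ncard :=
        Nat.add_le_add_left (ncard_zfBlueAt_diff_le hF s) _
    _ = (zfActiveAt G F B s).ncard := Set.ncard_inter_add_ncard_sdiff_eq_ncard _ _

theorem ncard_zfActiveAt_le (hF : ∀ v, {w | (v, w) ∈ F}.Subsingleton) (s : ℕ) :
    (zfActiveAt G F B s).ncard ≤ B.ncard := by
  induction s with
  | zero => rw [zfActiveAt_zero]
  | succ s ih => exact (ncard_zfActiveAt_succ_le hF s).trans ih

theorem ncard_zfBlueAt_le (hF : ∀ v, {w | (v, w) ∈ F}.Subsingleton) (s : ℕ) :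
    (zfBlueAt G F B s).ncard ≤ B.ncard * (s + 1) := by
  induction s with
  | zero => simp [zfBlueAt]
  | succ s ih =>
    have hnew : (zfBlueAt G F B (s + 1) \ zfBlueAt G F B s).ncard ≤ B.ncard :=
      ((ncard_zfBlueAt_diff_le hF s).trans (Set.ncard_le_ncard Set.sdiff_subset)).trans
        (ncard_zfActiveAt_le hF s)
    have := Set.ncard_le_ncard_sdiff_add_ncard (zfBlueAt G F B (s + 1)) (zfBlueAt G F B s)
    linarith

end Counting

theorem sInf_mem_of_sInf_le_natCast {S : Set ℕ∞} {t : ℕ} (h : sInf S ≤ t) :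
    sInf S ∈ S := by
  refine csInf_mem (Set.nonempty_iff_ne_empty.2 fun hS => ?_)
  rw [hS, sInf_empty] at h
  exact (ENat.natCast_lt_top t).not_ge h

theorem exists_zfBlueAt_eq_univ_of_thZFgraph_le {G : SimpleGraph V} {t : ℕ}
    (h : thZFgraph G ≤ t) :
    ∃ B F p, IsZFForceSet G B F ∧ zfBlueAt G F B p = Set.univ ∧ B.ncard + p ≤ t := by
  obtain ⟨B, hB⟩ := sInf_mem_of_sInf_le_natCast h
  rw [thZFgraph, hB, thZF] at h
  have hpt : ptZF G B ≤ t := le_add_self.trans h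
  obtain ⟨F, hF, hFB⟩ := sInf_mem_of_sInf_le_natCast hpt
  obtain ⟨p, hp, huniv⟩ := sInf_mem_of_sInf_le_natCast (hFB.symm.trans_le hpt)
  rw [ptZF, hFB, ptZFofF, hp] at h
  exact ⟨B, F, p, hF, huniv, by exact_mod_cast h⟩

theorem stmt14_general {V : Type*} [Fintype V] (G : SimpleGraph V) (t : ℕ)
    (h : thZFgraph G ≤ (t : ℕ∞)) :
    (Fintype.card V : ℝ) ≤ ((t : ℝ) + 1) ^ 2 / 4 := by
  obtain ⟨B, F, p, hF, huniv, hBp⟩ := exists_zfBlueAt_eq_univ_of_thZFgraph_le h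
  have hcard : Fintype.card V ≤ B.ncard * (p + 1) := by
    simpa [huniv] using ncard_zfBlueAt_le (G := G) (B := B) hF.subsingleton_targets p
  have hcard' : (Fintype.card V : ℝ) ≤ B.ncard * (p + 1) := by exact_mod_cast hcard
  have hBp' : (B.ncard : ℝ) + p ≤ t := by exact_mod_cast hBp
  nlinarith [sq_nonneg ((B.ncard : ℝ) - p - 1)]

/-- if `th_⌊Z⌋(G) ≤ t` then the order `n` of `G` satisfies `n ≤ (t+1)²/4`. -/
theorem stmt14 {V : Type*} [Fintype V] (G : SimpleGraph V) (t : ℕ) (ht : 0 < t)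
    (h : thZFgraph G ≤ (t : ℕ∞)) :
    (Fintype.card V : ℝ) ≤ ((t : ℝ) + 1) ^ 2 / 4 :=
  stmt14_general G t h

end ZFT
end

section
/- For a finite simple graph G, th_⌊Z⌋(G) = 2 if and only if G is isomorphic to K_2 or to 2K_1 (two isolated vertices). -/
open SimpleGraph

namespace ZFT

variable {V : Type*} {α : Type*} {β : Type*}

/-!
Taking every vertex blue gives `th_⌊Z⌋(G) ≤ |V|`. Conversely, a vertex performs at most one
force, so the blue set at most doubles in each time step and `|V| ≤ |B| * 2 ^ pt_⌊Z⌋(G;B)`;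
this forces `|B| + pt_⌊Z⌋(G;B) ≥ min |V| 3`. Hence `th_⌊Z⌋(G) = 2` exactly when `|V| = 2`,
and a graph on two vertices is `K_2` or `2K_1`.
-/

theorem min_three_le_add_of_le_mul_two_pow {n k t : ℕ} (h : n ≤ k * 2 ^ t) :
    min n 3 ≤ k + t := by
  rcases t with _ | _ | t
  · simp only [pow_zero, mul_one] at h; omega
  · simp only [zero_add, pow_one] at h; omega
  · rcases Nat.eq_zero_or_pos k with rfl | hk
    · simp only [zero_mul, nonpos_iff_eq_zero] at h; omega
    · omega

theorem ncard_setOf_exists_mem_le {S : Set α} {R : Set (α × β)} (hS : S.Finite)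
    (hR : ∀ a b b', (a, b) ∈ R → (a, b') ∈ R → b = b') :
    {b | ∃ a ∈ S, (a, b) ∈ R}.ncard ≤ S.ncard := by
  set X := R ∩ Prod.fst ⁻¹' S
  have hinj : Set.InjOn Prod.fst X := by
    rintro ⟨a, b⟩ ⟨hab, -⟩ ⟨a', b'⟩ ⟨hab', -⟩ (rfl : a = a')
    rw [hR a b b' hab hab']
  have hmaps : ∀ p ∈ X, p.1 ∈ S := fun p hp => hp.2
  have hX : X.Finite := (hS.subset (Set.image_subset_iff.2 hmaps)).of_finite_image hinj
  calc {b | ∃ a ∈ S, (a, b) ∈ R}.ncard = (Prod.snd '' X).ncard := by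
        congr 1; ext b; simp [X, and_comm]
    _ ≤ X.ncard := Set.ncard_image_le hX
    _ ≤ S.ncard := Set.ncard_le_ncard_of_injOn Prod.fst hmaps hinj hS

section ZFForcing

variable {G : SimpleGraph V} {B fr : Set V} {F : Set (V × V)} {L : List (V × V)}

theorem zfValidList.fst_notMem_s15 (h : zfValidList G B fr L) : ∀ p ∈ L, p.1 ∉ fr := by
  induction L generalizing B fr with
  | nil => simp
  | cons q L ih =>
    obtain ⟨hq, hL⟩ := h
    intro p hp
    rcases List.mem_cons.1 hp with rfl | hp
    · exact hq.2.2.1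
    · exact fun hfr => ih hL p hp (Set.mem_insert_of_mem _ hfr)

theorem zfValidList.nodup_map_fst_s15 (h : zfValidList G B fr L) : (L.map Prod.fst).Nodup := by
  induction L generalizing B fr with
  | nil => simp
  | cons q L ih =>
    obtain ⟨-, hL⟩ := h
    refine List.nodup_cons.2 ⟨?_, ih hL⟩
    intro hq
    obtain ⟨p, hp, hpq⟩ := List.mem_map.1 hq
    exact hL.fst_notMem_s15 p hp (hpq ▸ Set.mem_insert _ _)

theorem IsZFForceSet.snd_eq (hF : IsZFForceSet G B F) {u w w' : V} (hw : (u, w) ∈ F)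
    (hw' : (u, w') ∈ F) : w = w' := by
  obtain ⟨L, hL, -, rfl⟩ := hF
  exact congrArg Prod.snd (List.inj_on_of_nodup_map hL.nodup_map_fst_s15 hw hw' rfl)

theorem zfBlueAt_succ_subset (t : ℕ) :
    zfBlueAt G F B (t + 1) ⊆ zfBlueAt G F B t ∪ {w | ∃ v ∈ zfBlueAt G F B t, (v, w) ∈ F} := by
  rintro w (hw | ⟨v, hvw, hv, -⟩)
  exacts [Or.inl hw, Or.inr ⟨v, hv, hvw⟩]

theorem IsZFForceSet.ncard_zfBlueAt_le [Finite V] (hF : IsZFForceSet G B F) (t : ℕ) :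
    (zfBlueAt G F B t).ncard ≤ B.ncard * 2 ^ t := by
  induction t with
  | zero => simp [zfBlueAt]
  | succ t ih =>
    have hforced := ncard_setOf_exists_mem_le (zfBlueAt G F B t).toFinite
      fun _ _ _ => hF.snd_eq
    calc (zfBlueAt G F B (t + 1)).ncard
        ≤ (zfBlueAt G F B t ∪ {w | ∃ v ∈ zfBlueAt G F B t, (v, w) ∈ F}).ncard :=
          Set.ncard_le_ncard (zfBlueAt_succ_subset t)
      _ ≤ (zfBlueAt G F B t).ncard + {w | ∃ v ∈ zfBlueAt G F B t, (v, w) ∈ F}.ncard :=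
          Set.ncard_union_le _ _
      _ ≤ B.ncard * 2 ^ (t + 1) := by rw [pow_succ, ← mul_assoc]; omega

theorem le_ptZF [Finite V] {m : ℕ} (h : ∀ t : ℕ, Nat.card V ≤ B.ncard * 2 ^ t → m ≤ t) :
    (m : ℕ∞) ≤ ptZF G B := by
  refine le_sInf ?_
  rintro _ ⟨F, hF, rfl⟩
  refine le_sInf ?_
  rintro _ ⟨t, rfl, ht⟩
  have hcard := hF.ncard_zfBlueAt_le t
  rw [ht, Set.ncard_univ] at hcard
  exact_mod_cast h t hcard

theorem min_card_three_le_thZF [Finite V] (G : SimpleGraph V) (B : Set V) :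
    ((min (Nat.card V) 3 : ℕ) : ℕ∞) ≤ thZF G B := by
  set m := min (Nat.card V) 3
  have hpt : ((m - B.ncard : ℕ) : ℕ∞) ≤ ptZF G B := le_ptZF fun t ht => by
    have := min_three_le_add_of_le_mul_two_pow ht
    omega
  calc (m : ℕ∞) ≤ ((B.ncard + (m - B.ncard) : ℕ) : ℕ∞) := by exact_mod_cast (by omega)
    _ ≤ thZF G B := by rw [Nat.cast_add]; exact add_le_add le_rfl hpt

theorem min_card_three_le_thZFgraph [Finite V] (G : SimpleGraph V) :
    ((min (Nat.card V) 3 : ℕ) : ℕ∞) ≤ thZFgraph G :=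
  le_sInf fun _ ⟨B, hB⟩ => hB ▸ min_card_three_le_thZF G B

theorem isZFForceSet_univ (G : SimpleGraph V) : IsZFForceSet G Set.univ ∅ :=
  ⟨[], trivial, fun _ _ h => h.2.1 (Or.inl trivial), by simp⟩

theorem ptZF_univ (G : SimpleGraph V) : ptZF G Set.univ = 0 :=
  nonpos_iff_eq_zero.1 <|
    sInf_le_of_le ⟨∅, isZFForceSet_univ G, rfl⟩ (sInf_le ⟨0, by simp, rfl⟩)

theorem thZFgraph_le_card [Finite V] (G : SimpleGraph V) : thZFgraph G ≤ Nat.card V :=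
  sInf_le_of_le ⟨Set.univ, rfl⟩ (by simp [thZF, ptZF_univ, Set.ncard_univ])

theorem thZFgraph_eq_two_iff [Finite V] (G : SimpleGraph V) :
    thZFgraph G = 2 ↔ Nat.card V = 2 := by
  have hup := thZFgraph_le_card G
  have hlow := min_card_three_le_thZFgraph G
  constructor
  · intro h
    rw [h] at hup hlow
    have hup' : 2 ≤ Nat.card V := by exact_mod_cast hup
    have hlow' : min (Nat.card V) 3 ≤ 2 := by exact_mod_cast hlow
    omega
  · intro h
    rw [h] at hup hlow
    exact le_antisymm hup (by simpa using hlow)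

end ZFForcing

theorem eq_top_or_eq_bot_of_card_eq_two (G : SimpleGraph V) (h : Nat.card V = 2) :
    G = ⊤ ∨ G = ⊥ := by
  obtain ⟨a, b, hab, huniv⟩ := Nat.card_eq_two_iff.1 h
  have hmem (x : V) : x = a ∨ x = b := by
    have hx : x ∈ ({a, b} : Set V) := huniv ▸ Set.mem_univ x
    simpa using hx
  have hadj {x y : V} (hxy : x ≠ y) : G.Adj x y ↔ G.Adj a b := by
    rcases hmem x with rfl | rfl <;> rcases hmem y with rfl | rfl
    all_goals first | exact absurd rfl hxy | exact Iff.rfl | exact G.adj_comm _ _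
  by_cases hG : G.Adj a b
  · left; ext x y; rw [top_adj]; exact ⟨G.ne_of_adj, fun hxy => (hadj hxy).2 hG⟩
  · right; ext x y; simp only [bot_adj, iff_false]; exact fun hxy => hG ((hadj hxy.ne).1 hxy)

theorem card_eq_two_iff_nonempty_iso (G : SimpleGraph V) :
    Nat.card V = 2 ↔
      Nonempty (G ≃g (⊤ : SimpleGraph (Fin 2))) ∨ Nonempty (G ≃g (⊥ : SimpleGraph (Fin 2))) := by
  constructor
  · intro h
    have : Finite V := Nat.finite_of_card_ne_zero (h ▸ two_ne_zero)
    let e : V ≃ Fin 2 := (Finite.equivFin V).trans (finCongr h)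
    rcases eq_top_or_eq_bot_of_card_eq_two G h with rfl | rfl
    · exact Or.inl ⟨⟨e, by simp⟩⟩
    · exact Or.inr ⟨⟨e, by simp⟩⟩
  · rintro (h | h) <;> obtain ⟨e⟩ := h <;> simpa using Nat.card_congr e.toEquiv

/-- `th_⌊Z⌋(G) = 2` iff `G ≅ K_2` or `G ≅ 2K_1`. -/
theorem stmt15 {V : Type*} [Fintype V] (G : SimpleGraph V) :
    thZFgraph G = 2 ↔
      Nonempty (G ≃g (⊤ : SimpleGraph (Fin 2))) ∨
        Nonempty (G ≃g (⊥ : SimpleGraph (Fin 2))) := by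
  rw [thZFgraph_eq_two_iff, card_eq_two_iff_nonempty_iso]

end ZFT
end
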